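/- With u^ξ = (Id + ξΦ)(u⁺) as above and t the line spanned by E_{11}+...+E_{n−1,n−1}−(n−1)E_{nn}, one has [t, u^ξ] ⊆ u^{−ξ} for every ξ ∈ R. Consequently, for ξ ≠ 0, the subspace h ⊕ u^ξ ⊕ t is not closed under the Lie bracket. -/

import Mathlib

open scoped Matrix

/-- The degenerate diagonal matrix `diag(1,…,1,−1,…,−1,0)` (`p` ones, then `−1`s, then `0` in
the last slot), representing the standard form of signature `(p, q−1)` on the first `n−1`
coordinates of `ℝ^n`. -/
noncomputable def Jmat (n p : ℕ) : Matrix (Fin n) (Fin n) ℝ :=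
  Matrix.diagonal fun i => if (i : ℕ) = n - 1 then 0 else if (i : ℕ) < p then 1 else -1

/-- The subalgebra `h` of `sl_n(ℝ)`: matrices `[[A,0],[0,0]]` with `A ∈ so(p, q−1)`. -/
noncomputable def hSet (n p : ℕ) : Set (Matrix (Fin n) (Fin n) ℝ) :=
  {X | Xᵀ * Jmat n p + Jmat n p * X = 0 ∧
    ∀ i j : Fin n, ((i : ℕ) = n - 1 ∨ (j : ℕ) = n - 1) → X i j = 0}

/-- `u⁺ = span{E_{in} : 1 ≤ i ≤ n−1}`: matrices supported on the last column, off the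
diagonal. -/
def uPlus (n : ℕ) : Set (Matrix (Fin n) (Fin n) ℝ) :=
  {X | ∀ i j : Fin n, ¬((j : ℕ) = n - 1 ∧ (i : ℕ) ≠ n - 1) → X i j = 0}

/-- `u⁻ = span{E_{ni} : 1 ≤ i ≤ n−1}`: matrices supported on the last row, off the
diagonal. -/
def uMinus (n : ℕ) : Set (Matrix (Fin n) (Fin n) ℝ) :=
  {X | ∀ i j : Fin n, ¬((i : ℕ) = n - 1 ∧ (j : ℕ) ≠ n - 1) → X i j = 0}

/-- The generator `E₁₁ + ⋯ + E_{n−1,n−1} − (n−1)E_{nn}` of the one-dimensional subspace `t`. -/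
noncomputable def tGen (n : ℕ) : Matrix (Fin n) (Fin n) ℝ :=
  Matrix.diagonal fun i => if (i : ℕ) = n - 1 then -((n : ℝ) - 1) else 1

/-- The line `t = ℝ·(E₁₁ + ⋯ + E_{n−1,n−1} − (n−1)E_{nn})`. -/
noncomputable def tSet (n : ℕ) : Set (Matrix (Fin n) (Fin n) ℝ) :=
  {X | ∃ c : ℝ, X = c • tGen n}

/-- The map `Φ : u⁺ → u⁻` sending `E_{in} ↦ E_{ni}` for `i ≤ p` and `E_{in} ↦ −E_{ni}` for
`i > p` (indices `1 ≤ i ≤ n−1`). -/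
noncomputable def phiMap (n p : ℕ) (X : Matrix (Fin n) (Fin n) ℝ) :
    Matrix (Fin n) (Fin n) ℝ :=
  Matrix.of fun i j =>
    if (i : ℕ) = n - 1 then
      if (j : ℕ) = n - 1 then 0 else (if (j : ℕ) < p then 1 else -1) * X j i
    else 0

/-- The subspace `u^ξ = (Id + ξΦ)(u⁺)`. -/
noncomputable def uXi (n p : ℕ) (ξ : ℝ) : Set (Matrix (Fin n) (Fin n) ℝ) :=
  {Z | ∃ Y ∈ uPlus n, Z = Y + ξ • phiMap n p Y}

/-- The sum `h ⊕ u ⊕ t` as a set of matrices. -/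
noncomputable def sumSet (n p : ℕ) (u : Set (Matrix (Fin n) (Fin n) ℝ)) :
    Set (Matrix (Fin n) (Fin n) ℝ) :=
  {X | ∃ A ∈ hSet n p, ∃ B ∈ u, ∃ C ∈ tSet n, X = A + B + C}

/-! `ad t₀` acts on `u⁺` by `n` and on `u⁻` by `−n`, so it sends `Y + ξΦY` to `n(Y − ξΦY)`.
For `i < n`, every `Z ∈ h ⊕ u^ξ ⊕ t` satisfies `Z_{ni} = ±ξ Z_{in}` (as `h` and `t` vanish at these
entries), while `u^{−ξ}` imposes `Z_{ni} = ∓ξ Z_{in}`. For `ξ ≠ 0` both hold only if `Z_{in} = 0`,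
yet `[t₀, E_{1n} + ξΦE_{1n}]` has `(1, n)`-entry `n`. -/

theorem Matrix.lie_diagonal_apply {ι R : Type*} [Fintype ι] [DecidableEq ι] [CommRing R]
    (d : ι → R) (W : Matrix ι ι R) (i j : ι) :
    ⁅Matrix.diagonal d, W⁆ i j = (d i - d j) * W i j := by
  rw [Ring.lie_def, Matrix.sub_apply, Matrix.diagonal_mul, Matrix.mul_diagonal]
  ring

section

variable {n p : ℕ}

theorem lie_tGen_apply_of_last_col (W : Matrix (Fin n) (Fin n) ℝ) {i j : Fin n}
    (hi : (i : ℕ) ≠ n - 1) (hj : (j : ℕ) = n - 1) : ⁅tGen n, W⁆ i j = n * W i j := by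
  rw [tGen, Matrix.lie_diagonal_apply, if_neg hi, if_pos hj]
  ring

theorem lie_tGen_of_mem_uPlus {Y : Matrix (Fin n) (Fin n) ℝ} (hY : Y ∈ uPlus n) :
    ⁅tGen n, Y⁆ = (n : ℝ) • Y := by
  ext i j
  by_cases h : (j : ℕ) = n - 1 ∧ (i : ℕ) ≠ n - 1
  · rw [lie_tGen_apply_of_last_col Y h.2 h.1, Matrix.smul_apply, smul_eq_mul]
  · rw [tGen, Matrix.lie_diagonal_apply, Matrix.smul_apply, hY i j h, mul_zero, smul_zero]

theorem lie_tGen_of_mem_uMinus {Y : Matrix (Fin n) (Fin n) ℝ} (hY : Y ∈ uMinus n) :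
    ⁅tGen n, Y⁆ = -(n : ℝ) • Y := by
  ext i j
  rw [tGen, Matrix.lie_diagonal_apply, Matrix.smul_apply, smul_eq_mul]
  by_cases h : (i : ℕ) = n - 1 ∧ (j : ℕ) ≠ n - 1
  · rw [if_pos h.1, if_neg h.2]
    ring
  · rw [hY i j h, mul_zero, mul_zero]

theorem smul_mem_uPlus (a : ℝ) {Y : Matrix (Fin n) (Fin n) ℝ} (hY : Y ∈ uPlus n) :
    a • Y ∈ uPlus n := fun i j h => by rw [Matrix.smul_apply, hY i j h, smul_zero]

theorem single_mem_uPlus {i j : Fin n} (hi : (i : ℕ) ≠ n - 1) (hj : (j : ℕ) = n - 1) :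
    Matrix.single i j (1 : ℝ) ∈ uPlus n := by
  intro k l h
  refine Matrix.single_apply_of_ne _ _ _ _ _ ?_
  rintro ⟨rfl, rfl⟩
  exact h ⟨hj, hi⟩

theorem phiMap_mem_uMinus (Y : Matrix (Fin n) (Fin n) ℝ) : phiMap n p Y ∈ uMinus n := by
  intro i j h
  simp only [phiMap, Matrix.of_apply]
  split_ifs <;> tauto

theorem phiMap_smul (a : ℝ) (Y : Matrix (Fin n) (Fin n) ℝ) :
    phiMap n p (a • Y) = a • phiMap n p Y := by
  ext i j
  simp only [phiMap, Matrix.of_apply, Matrix.smul_apply, smul_eq_mul]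
  split_ifs <;> ring

theorem phiMap_apply_of_ne_last {Y : Matrix (Fin n) (Fin n) ℝ} {i j : Fin n}
    (hi : (i : ℕ) ≠ n - 1) : phiMap n p Y i j = 0 := by
  simp [phiMap, hi]

theorem phiMap_apply_of_last_row (Y : Matrix (Fin n) (Fin n) ℝ) {i j : Fin n}
    (hi : (i : ℕ) = n - 1) (hj : (j : ℕ) ≠ n - 1) :
    phiMap n p Y i j = (if (j : ℕ) < p then 1 else -1) * Y j i := by
  simp [phiMap, hi, hj]

theorem zero_mem_uXi (ξ : ℝ) : (0 : Matrix (Fin n) (Fin n) ℝ) ∈ uXi n p ξ :=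
  ⟨0, fun _ _ _ => rfl, by ext; simp [phiMap]⟩

theorem lie_mem_uXi_neg_of_mem_tSet {ξ : ℝ} {Z W : Matrix (Fin n) (Fin n) ℝ} (hZ : Z ∈ tSet n)
    (hW : W ∈ uXi n p ξ) : ⁅Z, W⁆ ∈ uXi n p (-ξ) := by
  -- `LieRing.ofAssociativeRing` is not a global instance; it is needed for `lie_add` and friends.
  let := LieRing.ofAssociativeRing (A := Matrix (Fin n) (Fin n) ℝ)
  let := LieAlgebra.ofAssociativeAlgebra (R := ℝ) (A := Matrix (Fin n) (Fin n) ℝ)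
  obtain ⟨c, rfl⟩ := hZ
  obtain ⟨Y, hY, rfl⟩ := hW
  refine ⟨(c * n) • Y, smul_mem_uPlus _ hY, ?_⟩
  rw [smul_lie, lie_add, lie_smul, lie_tGen_of_mem_uPlus hY,
    lie_tGen_of_mem_uMinus (phiMap_mem_uMinus Y), phiMap_smul]
  module

theorem apply_last_row_of_mem_uXi {ξ : ℝ} {W : Matrix (Fin n) (Fin n) ℝ} (hW : W ∈ uXi n p ξ)
    {i j : Fin n} (hi : (i : ℕ) = n - 1) (hj : (j : ℕ) ≠ n - 1) :
    W i j = ξ * (if (j : ℕ) < p then 1 else -1) * W j i := by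
  obtain ⟨Y, hY, rfl⟩ := hW
  have hYij : Y i j = 0 := hY i j fun h => hj h.1
  simp only [Matrix.add_apply, Matrix.smul_apply, smul_eq_mul, hYij,
    phiMap_apply_of_last_row Y hi hj, phiMap_apply_of_ne_last hj]
  ring

theorem apply_last_row_of_mem_sumSet {ξ : ℝ} {Z : Matrix (Fin n) (Fin n) ℝ}
    (hZ : Z ∈ sumSet n p (uXi n p ξ)) {i j : Fin n} (hi : (i : ℕ) = n - 1)
    (hj : (j : ℕ) ≠ n - 1) : Z i j = ξ * (if (j : ℕ) < p then 1 else -1) * Z j i := by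
  obtain ⟨A, hA, W, hW, C, ⟨c, rfl⟩, rfl⟩ := hZ
  have hij : i ≠ j := fun h => hj (h ▸ hi)
  simp only [Matrix.add_apply, Matrix.smul_apply, tGen, Matrix.diagonal_apply_ne _ hij,
    Matrix.diagonal_apply_ne _ hij.symm, hA.2 i j (Or.inl hi), hA.2 j i (Or.inr hi),
    apply_last_row_of_mem_uXi hW hi hj, smul_zero, zero_add, add_zero]

theorem apply_last_col_eq_zero_of_mem_sumSet_of_mem_uXi_neg {ξ : ℝ} (hξ : ξ ≠ 0)
    {Z : Matrix (Fin n) (Fin n) ℝ} (hZ : Z ∈ sumSet n p (uXi n p ξ)) (hZ' : Z ∈ uXi n p (-ξ))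
    {i j : Fin n} (hi : (i : ℕ) ≠ n - 1) (hj : (j : ℕ) = n - 1) : Z i j = 0 := by
  have hsign : (if (i : ℕ) < p then 1 else -1 : ℝ) ≠ 0 := by split_ifs <;> norm_num
  have h := (apply_last_row_of_mem_sumSet hZ hj hi).symm.trans
    (apply_last_row_of_mem_uXi hZ' hj hi)
  have h2 : 2 * ξ * (if (i : ℕ) < p then 1 else -1) * Z i j = 0 := by linarith
  exact (mul_eq_zero.mp h2).resolve_left (mul_ne_zero (mul_ne_zero two_ne_zero hξ) hsign)

theorem zero_mem_hSet : (0 : Matrix (Fin n) (Fin n) ℝ) ∈ hSet n p :=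
  ⟨by simp, fun _ _ _ => rfl⟩

theorem mem_sumSet_of_mem_uXi {ξ : ℝ} {W : Matrix (Fin n) (Fin n) ℝ} (hW : W ∈ uXi n p ξ) :
    W ∈ sumSet n p (uXi n p ξ) :=
  ⟨0, zero_mem_hSet, W, hW, 0, ⟨0, (zero_smul ℝ _).symm⟩, by rw [zero_add, add_zero]⟩

theorem tGen_mem_sumSet (ξ : ℝ) : tGen n ∈ sumSet n p (uXi n p ξ) :=
  ⟨0, zero_mem_hSet, 0, zero_mem_uXi ξ, tGen n, ⟨1, (one_smul ℝ _).symm⟩,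
    by rw [zero_add, zero_add]⟩

end

theorem t_bracket_uXi_general (n p q : ℕ) (hq : 2 ≤ q) (hn : p + q = n) (ξ : ℝ) :
    (∀ Z ∈ tSet n, ∀ W ∈ uXi n p ξ, ⁅Z, W⁆ ∈ uXi n p (-ξ)) ∧
    (ξ ≠ 0 → ¬(∀ X ∈ sumSet n p (uXi n p ξ), ∀ Y ∈ sumSet n p (uXi n p ξ),
      ⁅X, Y⁆ ∈ sumSet n p (uXi n p ξ))) := by
  refine ⟨fun Z hZ W hW => lie_mem_uXi_neg_of_mem_tSet hZ hW, fun hξ hclosed => ?_⟩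
  let i : Fin n := ⟨0, by omega⟩
  let N : Fin n := ⟨n - 1, by omega⟩
  have hi : (i : ℕ) ≠ n - 1 := show 0 ≠ n - 1 by omega
  have hN : (N : ℕ) = n - 1 := rfl
  let W := Matrix.single i N (1 : ℝ) + ξ • phiMap n p (Matrix.single i N 1)
  have hW : W ∈ uXi n p ξ := ⟨_, single_mem_uPlus hi hN, rfl⟩
  have hZ := hclosed _ (tGen_mem_sumSet ξ) _ (mem_sumSet_of_mem_uXi hW)
  have hZ' := lie_mem_uXi_neg_of_mem_tSet ⟨1, (one_smul ℝ _).symm⟩ hW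
  have hzero := apply_last_col_eq_zero_of_mem_sumSet_of_mem_uXi_neg hξ hZ hZ' hi hN
  have hWiN : W i N = 1 := by
    simp only [W, Matrix.add_apply, Matrix.smul_apply, Matrix.single_apply_same,
      phiMap_apply_of_ne_last hi, smul_zero, add_zero]
  rw [lie_tGen_apply_of_last_col W hi hN, hWiN, mul_one] at hzero
  exact (Nat.cast_ne_zero.mpr (by omega : n ≠ 0)) hzero

/-- `[t, u^ξ] ⊆ u^{−ξ}` for every `ξ ∈ ℝ`; consequently, for `ξ ≠ 0` the
subspace `h ⊕ u^ξ ⊕ t` is not closed under the Lie bracket. -/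
theorem t_bracket_uXi (n p q : ℕ) (hp : 1 ≤ p) (hq : 2 ≤ q) (hn : p + q = n) (ξ : ℝ) :
    (∀ Z ∈ tSet n, ∀ W ∈ uXi n p ξ, ⁅Z, W⁆ ∈ uXi n p (-ξ)) ∧
    (ξ ≠ 0 → ¬(∀ X ∈ sumSet n p (uXi n p ξ), ∀ Y ∈ sumSet n p (uXi n p ξ),
      ⁅X, Y⁆ ∈ sumSet n p (uXi n p ξ))) :=
  t_bracket_uXi_general n p q hq hn ξ
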